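/- arXiv:2208.12171 — 5 statements merged into one kernel-verified Lean document; each statement's English description precedes it below -/
import Mathlib

section
/- Suppose in an inverse system of $\mathbb{Q}$-vector spaces, $S \subseteq T$ is a subspace of a vector space $T$ carrying a directed family of surjections $\rho_\alpha : T \to T_\alpha$ onto finite-dimensional spaces with $\bigcap_\alpha \ker\rho_\alpha = 0$. Then $\varprojlim_\alpha \rho_\alpha(T) / \varprojlim_\alpha \rho_\alpha(S) \cong \varprojlim_\alpha \big(\rho_\alpha(T)/\rho_\alpha(S)\big)$, i.e. the completion of the quotient is the quotient of the completions. -/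
lemma aux_min_of_directed {V : Type*} [AddCommGroup V] [Module ℚ V] [FiniteDimensional ℚ V]
    (𝒜 : Set (AffineSubspace ℚ V)) (h1 : 𝒜.Nonempty)
    (h2 : ∀ A ∈ 𝒜, (A : Set V).Nonempty)
    (h3 : ∀ A ∈ 𝒜, ∀ B ∈ 𝒜, ∃ C ∈ 𝒜, C ≤ A ∧ C ≤ B) :
    ∃ A ∈ 𝒜, ∀ B ∈ 𝒜, A ≤ B := by
  have hne : ((fun A : AffineSubspace ℚ V => Module.finrank ℚ A.direction) '' 𝒜).Nonempty :=
    h1.image _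
  obtain ⟨A, hA, hAn⟩ := Nat.sInf_mem hne
  refine ⟨A, hA, fun B hB => ?_⟩
  obtain ⟨C, hC, hCA, hCB⟩ := h3 A hA B hB
  have hdir : C.direction = A.direction := by
    apply Submodule.eq_of_le_of_finrank_le (AffineSubspace.direction_le hCA)
    simp only at hAn
    rw [hAn]
    exact Nat.sInf_le ⟨C, hC, rfl⟩
  have hCeq : C = A := by
    obtain ⟨p, hp⟩ := h2 C hC
    exact AffineSubspace.ext_of_direction_eq hdir ⟨p, hp, hCA hp⟩
  rwa [← hCeq]

lemma aux_zorn_min {β : Type*} (X : β → Type*) [∀ i, PartialOrder (X i)]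
    (Sys : Set (∀ i, X i)) (F : ∀ i, X i) (hF : F ∈ Sys)
    (hchain : ∀ C ⊆ Sys, IsChain (· ≤ ·) C → C.Nonempty → ∃ lb ∈ Sys, ∀ c ∈ C, ∀ i, lb i ≤ c i) :
    ∃ m ∈ Sys, ∀ c ∈ Sys, (∀ i, c i ≤ m i) → ∀ i, m i ≤ c i := by
  have hbdd : ∀ C ⊆ (OrderDual.ofDual ⁻¹' Sys : Set ((∀ i, X i)ᵒᵈ)),
      IsChain (· ≤ ·) C → ∃ ub ∈ (OrderDual.ofDual ⁻¹' Sys : Set ((∀ i, X i)ᵒᵈ)),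
      ∀ z ∈ C, z ≤ ub := by
    intro C hC hchain'
    rcases C.eq_empty_or_nonempty with rfl | hne
    · exact ⟨OrderDual.toDual F, hF, by simp⟩
    obtain ⟨lb, hlb1, hlb2⟩ := hchain (OrderDual.ofDual '' C)
      (by rintro c ⟨c', hc', rfl⟩; exact hC hc')
      (by
        rintro a ⟨a', ha', rfl⟩ b ⟨b', hb', rfl⟩ hab
        rcases hchain' ha' hb' (fun h => hab (congrArg _ h)) with h | h
        · exact Or.inr (fun i => h i)
        · exact Or.inl (fun i => h i))
      (hne.image _)
    exact ⟨OrderDual.toDual lb, hlb1, fun c hc i => hlb2 _ ⟨c, hc, rfl⟩ i⟩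
  obtain ⟨m, hm⟩ := zorn_le₀ (OrderDual.ofDual ⁻¹' Sys) hbdd
  refine ⟨OrderDual.ofDual m, hm.prop, fun c hc hle i => ?_⟩
  exact hm.le_of_ge (show OrderDual.toDual c ∈ _ from hc) (fun i => hle i) i

lemma aux_key {ι : Type*} [Preorder ι] [IsDirected ι (· ≤ ·)] (Tα : ι → Type*)
    [∀ i, AddCommGroup (Tα i)] [∀ i, Module ℚ (Tα i)] [∀ i, FiniteDimensional ℚ (Tα i)]
    (t : ∀ i j, i ≤ j → (Tα j →ₗ[ℚ] Tα i))
    (hcomp : ∀ i j k (hij : i ≤ j) (hjk : j ≤ k) (z : Tα k),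
      t i j hij (t j k hjk z) = t i k (hij.trans hjk) z)
    (F : ∀ i, AffineSubspace ℚ (Tα i))
    (hFne : ∀ i, (F i : Set (Tα i)).Nonempty)
    (hFcomp : ∀ i j (h : i ≤ j), ∀ z ∈ F j, t i j h z ∈ F i) :
    ∃ y : ∀ i, Tα i, (∀ i, y i ∈ F i) ∧ ∀ i j (h : i ≤ j), t i j h (y j) = y i := by
  classical
  set Sys : Set (∀ i, AffineSubspace ℚ (Tα i)) :=
    {c | (∀ i, c i ≤ F i) ∧ (∀ i, (c i : Set (Tα i)).Nonempty) ∧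
      ∀ i j (h : i ≤ j), ∀ z ∈ c j, t i j h z ∈ c i} with hSysdef
  have hFSys : F ∈ Sys := ⟨fun i => le_refl _, hFne, hFcomp⟩
  obtain ⟨m, hmSys, hmmin⟩ := aux_zorn_min (fun i => AffineSubspace ℚ (Tα i)) Sys F hFSys (by
    intro C hC hchain hCne
    have hmin : ∀ i, ∃ A ∈ (fun c : ∀ i, AffineSubspace ℚ (Tα i) => c i) '' C,
        ∀ B ∈ (fun c : ∀ i, AffineSubspace ℚ (Tα i) => c i) '' C, A ≤ B := by
      intro i
      apply aux_min_of_directed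
      · exact hCne.image _
      · rintro A ⟨c, hc, rfl⟩
        exact (hC hc).2.1 i
      · rintro A ⟨c, hc, rfl⟩ B ⟨c', hc', rfl⟩
        rcases eq_or_ne c c' with rfl | hne
        · exact ⟨_, ⟨c, hc, rfl⟩, le_refl _, le_refl _⟩
        rcases hchain hc hc' hne with h | h
        · exact ⟨_, ⟨c, hc, rfl⟩, le_refl _, h i⟩
        · exact ⟨_, ⟨c', hc', rfl⟩, h i, le_refl _⟩
    choose lb hlbmem hlbmin using hmin
    have hlbSys : lb ∈ Sys := by
      refine ⟨?_, ?_, ?_⟩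
      · intro i
        obtain ⟨c, hc, hceq⟩ := hlbmem i
        rw [← hceq]
        exact (hC hc).1 i
      · intro i
        obtain ⟨c, hc, hceq⟩ := hlbmem i
        rw [← hceq]
        exact (hC hc).2.1 i
      · intro i j h z hz
        obtain ⟨c, hc, hceq⟩ := hlbmem i
        rw [← hceq]
        exact (hC hc).2.2 i j h z (hlbmin j _ ⟨c, hc, rfl⟩ hz)
    exact ⟨lb, hlbSys, fun c hc i => hlbmin i _ ⟨c, hc, rfl⟩⟩)
  obtain ⟨hmF, hmne, hmcomp⟩ := hmSys
  -- transitions map the minimal system into itself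
  have hmaple : ∀ k j (h : k ≤ j), (m j).map (t k j h).toAffineMap ≤ m k := by
    intro k j h z hz
    simp only [SetLike.mem_coe, AffineSubspace.mem_map] at hz ⊢
    obtain ⟨w, hw, rfl⟩ := hz
    exact hmcomp k j h w hw
  -- Step 1: transitions of the minimal system are surjective
  have hsurjm : ∀ k j (h : k ≤ j), (m j).map (t k j h).toAffineMap = m k := by
    have hmin : ∀ k, ∃ A ∈ {A : AffineSubspace ℚ (Tα k) |
        ∃ j, ∃ h : k ≤ j, A = (m j).map (t k j h).toAffineMap},
        ∀ B ∈ {A : AffineSubspace ℚ (Tα k) |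
        ∃ j, ∃ h : k ≤ j, A = (m j).map (t k j h).toAffineMap}, A ≤ B := by
      intro k
      apply aux_min_of_directed
      · exact ⟨_, k, le_refl k, rfl⟩
      · rintro A ⟨j, h, rfl⟩
        obtain ⟨p, hp⟩ := hmne j
        exact ⟨t k j h p, AffineSubspace.mem_map.mpr ⟨p, hp, rfl⟩⟩
      · rintro A ⟨j₁, h₁, rfl⟩ B ⟨j₂, h₂, rfl⟩
        obtain ⟨j₃, hj₁, hj₂⟩ := directed_of (· ≤ ·) j₁ j₂
        refine ⟨(m j₃).map (t k j₃ (h₁.trans hj₁)).toAffineMap, ⟨j₃, _, rfl⟩, ?_, ?_⟩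
        · intro z hz
          simp only [SetLike.mem_coe, AffineSubspace.mem_map] at hz ⊢
          obtain ⟨w, hw, rfl⟩ := hz
          exact ⟨t j₁ j₃ hj₁ w, hmcomp j₁ j₃ hj₁ w hw, hcomp k j₁ j₃ h₁ hj₁ w⟩
        · intro z hz
          simp only [SetLike.mem_coe, AffineSubspace.mem_map] at hz ⊢
          obtain ⟨w, hw, rfl⟩ := hz
          exact ⟨t j₂ j₃ hj₂ w, hmcomp j₂ j₃ hj₂ w hw, hcomp k j₂ j₃ h₂ hj₂ w⟩
    choose m' hm'mem hm'min using hmin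
    have hm'le : ∀ k, m' k ≤ m k :=
      fun k => le_trans (hm'min k _ ⟨k, le_refl k, rfl⟩) (hmaple k k (le_refl k))
    have hm'Sys : m' ∈ Sys := by
      refine ⟨fun k => le_trans (hm'le k) (hmF k), ?_, ?_⟩
      · intro k
        obtain ⟨j, h, hjeq⟩ := hm'mem k
        rw [hjeq]
        obtain ⟨p, hp⟩ := hmne j
        exact ⟨t k j h p, AffineSubspace.mem_map.mpr ⟨p, hp, rfl⟩⟩
      · intro k l hkl z hz
        obtain ⟨jk, hjk, hjkeq⟩ := hm'mem k
        obtain ⟨j', hj'1, hj'2⟩ := directed_of (· ≤ ·) jk l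
        have hz' : z ∈ (m j').map (t l j' hj'2).toAffineMap := hm'min l _ ⟨j', hj'2, rfl⟩ hz
        rw [AffineSubspace.mem_map] at hz'
        obtain ⟨w, hw, rfl⟩ := hz'
        rw [hjkeq, AffineSubspace.mem_map]
        refine ⟨t jk j' hj'1 w, hmcomp jk j' hj'1 w hw, ?_⟩
        simp only [LinearMap.coe_toAffineMap]
        rw [hcomp k jk j' hjk hj'1 w, hcomp k l j' hkl hj'2 w]
    have hle : ∀ k, m k ≤ m' k := hmmin m' hm'Sys hm'le
    intro k j h
    exact le_antisymm (hmaple k j h) (le_trans (hle k) (hm'min k _ ⟨j, h, rfl⟩))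
  -- Step 2: each m i is a singleton
  have hsub : ∀ i₀ (p : Tα i₀), p ∈ m i₀ → ∀ q ∈ m i₀, q = p := by
    intro i₀ p hp
    have hmk' : ∀ z' : Tα i₀, z' ∈ AffineSubspace.mk' p (⊥ : Submodule ℚ (Tα i₀)) ↔ z' = p := by
      intro z'
      rw [AffineSubspace.mem_mk']
      simp [sub_eq_zero]
    set B : ∀ j, i₀ ≤ j → AffineSubspace ℚ (Tα j) := fun j h2 =>
      m j ⊓ AffineSubspace.comap (t i₀ j h2).toAffineMap
        (AffineSubspace.mk' p (⊥ : Submodule ℚ (Tα i₀))) with hBdef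
    have hBmem : ∀ j (h2 : i₀ ≤ j) (z : Tα j), z ∈ B j h2 ↔ z ∈ m j ∧ t i₀ j h2 z = p := by
      intro j h2 z
      rw [hBdef]
      rw [AffineSubspace.mem_inf_iff, AffineSubspace.mem_comap, hmk']
      simp only [LinearMap.coe_toAffineMap]
    have hBne : ∀ j (h2 : i₀ ≤ j), ((B j h2 : Set (Tα j))).Nonempty := by
      intro j h2
      have hp' : p ∈ (m j).map (t i₀ j h2).toAffineMap := (hsurjm i₀ j h2) ▸ hp
      rw [AffineSubspace.mem_map] at hp'
      obtain ⟨w, hw, hweq⟩ := hp'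
      exact ⟨w, (hBmem j h2 w).mpr ⟨hw, hweq⟩⟩
    have hmin : ∀ k, ∃ A ∈ {A : AffineSubspace ℚ (Tα k) |
        ∃ j, ∃ h1 : k ≤ j, ∃ h2 : i₀ ≤ j, A = (B j h2).map (t k j h1).toAffineMap},
        ∀ A' ∈ {A : AffineSubspace ℚ (Tα k) |
        ∃ j, ∃ h1 : k ≤ j, ∃ h2 : i₀ ≤ j, A = (B j h2).map (t k j h1).toAffineMap}, A ≤ A' := by
      intro k
      apply aux_min_of_directed
      · obtain ⟨j, h1, h2⟩ := directed_of (· ≤ ·) k i₀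
        exact ⟨_, j, h1, h2, rfl⟩
      · rintro A ⟨j, h1, h2, rfl⟩
        obtain ⟨w, hw⟩ := hBne j h2
        exact ⟨t k j h1 w, AffineSubspace.mem_map.mpr ⟨w, hw, rfl⟩⟩
      · rintro A ⟨j₁, h₁, h₁', rfl⟩ A' ⟨j₂, h₂, h₂', rfl⟩
        obtain ⟨j₃, hj₁, hj₂⟩ := directed_of (· ≤ ·) j₁ j₂
        refine ⟨(B j₃ (h₁'.trans hj₁)).map (t k j₃ (h₁.trans hj₁)).toAffineMap,
          ⟨j₃, _, _, rfl⟩, ?_, ?_⟩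
        · intro z hz
          simp only [SetLike.mem_coe, AffineSubspace.mem_map] at hz ⊢
          obtain ⟨w, hw, rfl⟩ := hz
          rw [hBmem] at hw
          refine ⟨t j₁ j₃ hj₁ w, (hBmem j₁ h₁' _).mpr
            ⟨hmcomp j₁ j₃ hj₁ w hw.1, by rw [hcomp i₀ j₁ j₃ h₁' hj₁ w]; exact hw.2⟩,
            hcomp k j₁ j₃ h₁ hj₁ w⟩
        · intro z hz
          simp only [SetLike.mem_coe, AffineSubspace.mem_map] at hz ⊢
          obtain ⟨w, hw, rfl⟩ := hz
          rw [hBmem] at hw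
          refine ⟨t j₂ j₃ hj₂ w, (hBmem j₂ h₂' _).mpr
            ⟨hmcomp j₂ j₃ hj₂ w hw.1, by rw [hcomp i₀ j₂ j₃ h₂' hj₂ w]; exact hw.2⟩,
            hcomp k j₂ j₃ h₂ hj₂ w⟩
    choose m'' hm''mem hm''min using hmin
    have hm''le : ∀ k, m'' k ≤ m k := by
      intro k
      obtain ⟨j, h1, h2, hjeq⟩ := hm''mem k
      rw [hjeq]
      intro z hz
      simp only [SetLike.mem_coe, AffineSubspace.mem_map] at hz ⊢
      obtain ⟨w, hw, rfl⟩ := hz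
      rw [hBmem] at hw
      exact hmcomp k j h1 w hw.1
    have hm''Sys : m'' ∈ Sys := by
      refine ⟨fun k => le_trans (hm''le k) (hmF k), ?_, ?_⟩
      · intro k
        obtain ⟨j, h1, h2, hjeq⟩ := hm''mem k
        rw [hjeq]
        obtain ⟨w, hw⟩ := hBne j h2
        exact ⟨t k j h1 w, AffineSubspace.mem_map.mpr ⟨w, hw, rfl⟩⟩
      · intro k l hkl z hz
        obtain ⟨jk, hjk1, hjk2, hjkeq⟩ := hm''mem k
        obtain ⟨j', hj'1, hj'2⟩ := directed_of (· ≤ ·) jk l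
        have hz' : z ∈ (B j' (hjk2.trans hj'1)).map (t l j' hj'2).toAffineMap :=
          hm''min l _ ⟨j', hj'2, hjk2.trans hj'1, rfl⟩ hz
        rw [AffineSubspace.mem_map] at hz'
        obtain ⟨w, hw, rfl⟩ := hz'
        rw [hBmem] at hw
        rw [hjkeq, AffineSubspace.mem_map]
        refine ⟨t jk j' hj'1 w, (hBmem jk hjk2 _).mpr
          ⟨hmcomp jk j' hj'1 w hw.1, by rw [hcomp i₀ jk j' hjk2 hj'1 w]; exact hw.2⟩, ?_⟩
        simp only [LinearMap.coe_toAffineMap]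
        rw [hcomp k jk j' hjk1 hj'1 w, hcomp k l j' hkl hj'2 w]
    have hle : ∀ k, m k ≤ m'' k := hmmin m'' hm''Sys hm''le
    intro q hq
    have hq' : q ∈ m'' i₀ := hle i₀ hq
    have hq'' : q ∈ (B i₀ (le_refl i₀)).map (t i₀ i₀ (le_refl i₀)).toAffineMap :=
      hm''min i₀ _ ⟨i₀, le_refl i₀, le_refl i₀, rfl⟩ hq'
    rw [AffineSubspace.mem_map] at hq''
    obtain ⟨w, hw, rfl⟩ := hq''
    rw [hBmem] at hw
    exact hw.2
  choose y hy using hmne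
  refine ⟨y, fun i => hmF i (hy i), fun i j h => ?_⟩
  exact hsub i (y i) (hy i) _ (hmcomp i j h (y j) (hy j))


/-- The inverse limit of an inverse system of `ℚ`-modules, as the submodule of
coherent families in the product. -/
def invLim {ι : Type*} [Preorder ι] (M : ι → Type*)
    [∀ i, AddCommGroup (M i)] [∀ i, Module ℚ (M i)]
    (t : ∀ i j, i ≤ j → (M j →ₗ[ℚ] M i)) : Submodule ℚ (∀ i, M i) where
  carrier := {x | ∀ i j (h : i ≤ j), t i j h (x j) = x i}
  add_mem' := by
    intro a b ha hb i j h
    simp only [Pi.add_apply, map_add, ha i j h, hb i j h]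
  zero_mem' := by intro i j h; simp
  smul_mem' := by
    intro c a ha i j h
    simp only [Pi.smul_apply, map_smul, ha i j h]

lemma aux_main {ι : Type*} [Preorder ι] [IsDirected ι (· ≤ ·)] (Tα : ι → Type*)
    [∀ i, AddCommGroup (Tα i)] [∀ i, Module ℚ (Tα i)] [∀ i, FiniteDimensional ℚ (Tα i)]
    (t : ∀ i j, i ≤ j → (Tα j →ₗ[ℚ] Tα i))
    (hcomp : ∀ i j k (hij : i ≤ j) (hjk : j ≤ k) (z : Tα k),
      t i j hij (t j k hjk z) = t i k (hij.trans hjk) z)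
    (W : ∀ i, Submodule ℚ (Tα i))
    (tQ : ∀ i j, i ≤ j → ((Tα j ⧸ W j) →ₗ[ℚ] (Tα i ⧸ W i)))
    (htQ : ∀ i j (h : i ≤ j) (z : Tα j),
      tQ i j h (Submodule.Quotient.mk z) = Submodule.Quotient.mk (t i j h z)) :
    Nonempty (
      ((invLim Tα t) ⧸
        ((invLim Tα t ⊓ Submodule.pi Set.univ W).comap (invLim Tα t).subtype))
      ≃ₗ[ℚ] (invLim (fun i => Tα i ⧸ W i) tQ)) := by
  classical
  set L := invLim Tα t with hL
  set LQ := invLim (fun i => Tα i ⧸ W i) tQ with hLQ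
  set ψ : (∀ i, Tα i) →ₗ[ℚ] (∀ i, Tα i ⧸ W i) :=
    LinearMap.pi (fun i => (W i).mkQ.comp (LinearMap.proj i)) with hψ
  have hψapp : ∀ (z : ∀ i, Tα i) (i : ι), ψ z i = Submodule.Quotient.mk (z i) := by
    intro z i; rfl
  have hψmem : ∀ z : L, ψ z.1 ∈ LQ := by
    rintro ⟨z, hz⟩ i j h
    simp only [hψapp]
    rw [htQ, hz i j h]
  set φ : L →ₗ[ℚ] LQ := LinearMap.codRestrict LQ (ψ.comp L.subtype) hψmem with hφ
  have hφapp : ∀ (z : L) (i : ι), (φ z).1 i = Submodule.Quotient.mk (z.1 i) := by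
    intro z i; rfl
  have hφsurj : Function.Surjective φ := by
    rintro ⟨x, hx⟩
    choose s hs using fun i => Submodule.Quotient.mk_surjective (W i) (x i)
    set F : ∀ i, AffineSubspace ℚ (Tα i) := fun i => AffineSubspace.mk' (s i) (W i) with hF
    have hmemF : ∀ i (z : Tα i), z ∈ F i ↔ Submodule.Quotient.mk z = x i := by
      intro i z
      rw [hF]
      rw [AffineSubspace.mem_mk']
      rw [← hs i]
      rw [vsub_eq_sub]
      exact (Submodule.Quotient.eq (W i)).symm
    obtain ⟨y, hy1, hy2⟩ := aux_key Tα t hcomp F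
      (fun i => ⟨s i, (hmemF i (s i)).mpr (hs i)⟩)
      (by
        intro i j h z hz
        rw [hmemF] at hz ⊢
        rw [← htQ i j h z, hz]
        exact hx i j h)
    refine ⟨⟨y, hy2⟩, ?_⟩
    apply Subtype.ext
    funext i
    rw [hφapp]
    exact (hmemF i (y i)).mp (hy1 i)
  have hker : ((invLim Tα t ⊓ Submodule.pi Set.univ W).comap (invLim Tα t).subtype)
      = LinearMap.ker φ := by
    ext z
    simp only [Submodule.mem_comap, Submodule.mem_inf, Submodule.coe_subtype,
      Submodule.mem_pi, Set.mem_univ, forall_true_left, LinearMap.mem_ker]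
    constructor
    · rintro ⟨-, h⟩
      apply Subtype.ext
      funext i
      rw [hφapp]
      exact (Submodule.Quotient.mk_eq_zero _).2 (h _)
    · intro h
      refine ⟨z.2, fun i => ?_⟩
      have := congrArg (fun w : LQ => w.1 i) h
      rw [hφapp] at this
      exact (Submodule.Quotient.mk_eq_zero _).1 this
  exact ⟨(Submodule.quotEquivOfEq _ _ hker).trans (φ.quotKerEquivOfSurjective hφsurj)⟩

/-- Let `T` be an enriched `ℚ`-vector space: it carries a directed family
of surjections `ρ i : T → Tα i` onto finite-dimensional spaces with
`⋂ ker (ρ i) = 0`.  For any subspace `S ⊆ T`,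
`(lim ρ i (T)) / (lim ρ i (S)) ≅ lim (ρ i (T) / ρ i (S))`: the completion of the
quotient is the quotient of the completions.  (Since each `ρ i` is surjective,
`ρ i (T) = Tα i`.) -/
theorem stmt3 {ι T : Type*} [Preorder ι] [IsDirected ι (· ≤ ·)]
    [AddCommGroup T] [Module ℚ T]
    (Tα : ι → Type*) [∀ i, AddCommGroup (Tα i)] [∀ i, Module ℚ (Tα i)]
    [∀ i, FiniteDimensional ℚ (Tα i)]
    (ρ : ∀ i, T →ₗ[ℚ] Tα i) (hsurj : ∀ i, Function.Surjective (ρ i))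
    (t : ∀ i j, i ≤ j → (Tα j →ₗ[ℚ] Tα i))
    (ht : ∀ i j (h : i ≤ j) (x : T), t i j h (ρ j x) = ρ i x)
    (hker : ∀ x : T, (∀ i, ρ i x = 0) → x = 0)
    (S : Submodule ℚ T) :
    Nonempty (
      ((invLim Tα t) ⧸
        ((invLim Tα t ⊓ Submodule.pi Set.univ fun i => S.map (ρ i)).comap
          (invLim Tα t).subtype))
      ≃ₗ[ℚ]
      (invLim (fun i => Tα i ⧸ S.map (ρ i)) (fun i j h =>
        Submodule.mapQ (S.map (ρ j)) (S.map (ρ i)) (t i j h) (by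
          intro x hx
          rw [Submodule.mem_map] at hx
          obtain ⟨s, hs, rfl⟩ := hx
          exact Submodule.mem_comap.mpr
            (Submodule.mem_map.mpr ⟨s, hs, (ht i j h s).symm⟩))))) := by
  
  have hcomp : ∀ i j k (hij : i ≤ j) (hjk : j ≤ k) (z : Tα k),
      t i j hij (t j k hjk z) = t i k (hij.trans hjk) z := by
    intro i j k hij hjk z
    obtain ⟨w, rfl⟩ := hsurj k z
    rw [ht, ht, ht]
  exact aux_main Tα t hcomp (fun i => S.map (ρ i)) _
    (fun i j h z => Submodule.mapQ_apply _ _ _ z)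
end

section
/- In a complete enriched vector space $T$, every finite-dimensional subspace is closed. -/
/-- In a complete enriched `ℚ`-vector space `T` (with structure
surjections `ρ i : T → Tα i` onto finite-dimensional spaces, directed, with
`⋂ ker (ρ i) = 0`, and complete), every finite-dimensional subspace `S` is closed:
`S = ⋂ i (S + ker (ρ i))`. -/
theorem stmt6 {ι T : Type*} [Preorder ι] [IsDirected ι (· ≤ ·)]
    [AddCommGroup T] [Module ℚ T]
    (Tα : ι → Type*) [∀ i, AddCommGroup (Tα i)] [∀ i, Module ℚ (Tα i)]
    [∀ i, FiniteDimensional ℚ (Tα i)]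
    (ρ : ∀ i, T →ₗ[ℚ] Tα i) (hsurj : ∀ i, Function.Surjective (ρ i))
    (t : ∀ i j, i ≤ j → (Tα j →ₗ[ℚ] Tα i))
    (ht : ∀ i j (h : i ≤ j) (x : T), t i j h (ρ j x) = ρ i x)
    (hker : ∀ x : T, (∀ i, ρ i x = 0) → x = 0)
    (hcomplete : ∀ y : ∀ i, Tα i, (∀ i j (h : i ≤ j), t i j h (y j) = y i) →
      ∃ x : T, ∀ i, ρ i x = y i)
    (S : Submodule ℚ T) (hS : FiniteDimensional ℚ S) :
    S = ⨅ i, (S ⊔ LinearMap.ker (ρ i)) := by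
  refine le_antisymm (le_iInf fun i => le_sup_left) ?_
  intro x hx
  simp only [Submodule.mem_iInf] at hx
  by_cases hne : Nonempty ι
  · -- kernels are monotone decreasing
    have hmono : ∀ i k, i ≤ k → LinearMap.ker (ρ k) ≤ LinearMap.ker (ρ i) := by
      intro i k h y hy
      simp only [LinearMap.mem_ker] at *
      rw [← ht i k h y, hy, map_zero]
    set W : ι → Submodule ℚ T := fun i => S ⊓ LinearMap.ker (ρ i) with hW
    have hWfd : ∀ i, FiniteDimensional ℚ (W i) :=
      fun i => Submodule.finiteDimensional_of_le (inf_le_left)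
    -- pick i₀ minimizing finrank of W i
    have hne' : (Set.range fun i => Module.finrank ℚ (W i)).Nonempty := by
      obtain ⟨i⟩ := hne
      exact ⟨_, ⟨i, rfl⟩⟩
    obtain ⟨i₀, hi₀⟩ := Nat.sInf_mem hne'
    -- W i₀ ≤ W j for all j
    have hWmin : ∀ j, W i₀ ≤ W j := by
      intro j
      obtain ⟨m, hm₀, hmj⟩ := directed_of (· ≤ ·) i₀ j
      have h1 : W m ≤ W i₀ := inf_le_inf le_rfl (hmono _ _ hm₀)
      have h2 : Module.finrank ℚ (W i₀) ≤ Module.finrank ℚ (W m) :=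
        hi₀.le.trans (Nat.sInf_le ⟨m, rfl⟩)
      have := hWfd i₀
      have heq : W m = W i₀ := Submodule.eq_of_le_of_finrank_le h1 h2
      calc W i₀ = W m := heq.symm
        _ ≤ W j := inf_le_inf le_rfl (hmono _ _ hmj)
    have hWbot : W i₀ = ⊥ := by
      rw [eq_bot_iff]
      intro y hy
      have : y = 0 := hker y fun i => (hWmin i hy).2
      simp [this]
    -- decompose x at level i₀
    obtain ⟨s, hs, k, hk, hsk⟩ := Submodule.mem_sup.mp (hx i₀)
    -- claim x - s ∈ ker ρ i for all i
    have key : ∀ i, ρ i (x - s) = 0 := by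
      intro i
      obtain ⟨m, hm₀, hmi⟩ := directed_of (· ≤ ·) i₀ i
      obtain ⟨s', hs', k', hk', hsk'⟩ := Submodule.mem_sup.mp (hx m)
      have hss' : s - s' ∈ W i₀ := by
        constructor
        · exact Submodule.sub_mem _ hs hs'
        · have : s - s' = k' - k := by
            rw [sub_eq_sub_iff_add_eq_add, hsk, add_comm k' s', hsk']
          rw [this]
          exact Submodule.sub_mem _ (hmono _ _ hm₀ hk') hk
      have hss'' : s = s' := by
        have := hWbot ▸ hss'
        rw [Submodule.mem_bot] at this
        exact sub_eq_zero.mp this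
      have hxk' : x - s = k' := by
        rw [hss'', ← hsk', add_sub_cancel_left]
      rw [hxk']
      exact hmono _ _ hmi hk'
    have : x = s := sub_eq_zero.mp (hker _ key)
    rwa [this]
  · -- ι empty: every element is 0
    have : x = 0 := hker x fun i => absurd ⟨i⟩ hne
    simp [this]
end

section
/- Let $L$ be a complete enriched Lie algebra ($L = \varprojlim_\alpha L_\alpha$, each $L_\alpha$ finite-dimensional nilpotent) and let $E \subseteq L$ be a sub Lie algebra such that $E + L^{(2)} = L$, where $L^{(2)}$ is the closure of $[L,L]$. Then the closure of $E$ equals $L$, i.e. $\rho_\alpha(E) = L_\alpha$ for every $\alpha$. -/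
/-- Let `L` be a complete enriched Lie algebra over `ℚ`
(`L = lim Lα`, each `Lα` finite-dimensional nilpotent, structure morphisms
`ρ i : L → Lα i` surjective) and let `E ⊆ L` be a Lie subalgebra with
`E + L^(2) = L`, where `L^(2)` is the closure of `[L, L]`
(so every `x ∈ L` is `e + c` with `e ∈ E` and `c` in the closure of `[L, L]`).
Then the closure of `E` equals `L`, i.e., `ρ i (E) = Lα i` for every `i`. -/
theorem stmt8 {ι L : Type*} [Preorder ι] [IsDirected ι (· ≤ ·)]
    [LieRing L] [LieAlgebra ℚ L]
    (Lα : ι → Type*) [∀ i, LieRing (Lα i)] [∀ i, LieAlgebra ℚ (Lα i)]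
    [∀ i, FiniteDimensional ℚ (Lα i)]
    (hnilp : ∀ i, ∃ m, LieModule.lowerCentralSeries ℚ (Lα i) (Lα i) m = ⊥)
    (ρ : ∀ i, L →ₗ⁅ℚ⁆ Lα i) (hsurj : ∀ i, Function.Surjective (ρ i))
    (t : ∀ i j, i ≤ j → (Lα j →ₗ⁅ℚ⁆ Lα i))
    (ht : ∀ i j (h : i ≤ j) (x : L), t i j h (ρ j x) = ρ i x)
    (hker : ∀ x : L, (∀ i, ρ i x = 0) → x = 0)
    (hcomplete : ∀ y : ∀ i, Lα i, (∀ i j (h : i ≤ j), t i j h (y j) = y i) →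
      ∃ x : L, ∀ i, ρ i x = y i)
    (E : LieSubalgebra ℚ L)
    (hE : ∀ x : L, ∃ e ∈ E, ∃ c : L,
      (∀ i, ρ i c ∈
        Submodule.map (ρ i).toLinearMap
          (LieModule.lowerCentralSeries ℚ L L 1).toSubmodule) ∧ x = e + c) :
    ∀ i (y : Lα i), ∃ e ∈ E, ρ i e = y := by
  intro i y
  -- `S` is the image of `E` in `Lα i`.
  set S : LieSubalgebra ℚ (Lα i) := E.map (ρ i) with hS
  -- `P k` is the `k`-th term of the lower central series of `Lα i`, as a submodule.
  set P : ℕ → Submodule ℚ (Lα i) :=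
    fun k => (LieModule.lowerCentralSeries ℚ (Lα i) (Lα i) k).toSubmodule with hP
  -- The image of `[L,L]` lands in `[Lα i, Lα i]`.
  have hP1 : ∀ z : Lα i,
      z ∈ Submodule.map (ρ i).toLinearMap
        (LieModule.lowerCentralSeries ℚ L L 1).toSubmodule → z ∈ P 1 := by
    rintro _ ⟨d, hd, rfl⟩
    exact LieIdeal.map_lowerCentralSeries_le 1 (LieIdeal.mem_map hd)
  -- Every element of `Lα i` decomposes as `s + c` with `s ∈ S`, `c ∈ P 1`.
  have hdec : ∀ z : Lα i, ∃ s ∈ S.toSubmodule, ∃ c ∈ P 1, z = s + c := by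
    intro z
    obtain ⟨x, rfl⟩ := hsurj i z
    obtain ⟨e, he, c, hc, rfl⟩ := hE x
    refine ⟨ρ i e, ⟨e, he, rfl⟩, ρ i c, hP1 _ (hc i), by simp⟩
  -- Main induction: `S + P k = ⊤` for all `k`.
  have key : ∀ k : ℕ, S.toSubmodule ⊔ P k = ⊤ := by
    intro k
    induction k with
    | zero =>
      have : P 0 = ⊤ := by
        simp [hP, LieModule.lowerCentralSeries_zero]
      rw [this]; exact sup_top_eq _
    | succ k ih =>
      refine top_unique ?_
      intro z _
      obtain ⟨s, hs, c, hc, rfl⟩ := hdec z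
      refine Submodule.add_mem _ (Submodule.mem_sup_left hs) ?_
      -- it suffices to show `P 1 ≤ S ⊔ P (k+1)`
      suffices h : P 1 ≤ S.toSubmodule ⊔ P (k + 1) from h hc
      clear hc hs
      have h1 : P 1 =
          (⁅(⊤ : LieIdeal ℚ (Lα i)),
            LieModule.lowerCentralSeries ℚ (Lα i) (Lα i) 0⁆ :
              LieSubmodule ℚ (Lα i) (Lα i)).toSubmodule := by
        simp only [hP]
        exact congrArg LieSubmodule.toSubmodule
          (LieModule.lowerCentralSeries_succ ℚ (Lα i) (Lα i) 0)
      rw [h1, LieSubmodule.lieIdeal_oper_eq_linear_span']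
      rw [Submodule.span_le]
      rintro _ ⟨a, -, b, -, rfl⟩
      -- decompose `a` and `b` using the induction hypothesis
      have ha : a ∈ S.toSubmodule ⊔ P k := by rw [ih]; trivial
      have hb : b ∈ S.toSubmodule ⊔ P k := by rw [ih]; trivial
      obtain ⟨s1, hs1, c1, hc1, rfl⟩ := Submodule.mem_sup.mp ha
      obtain ⟨s2, hs2, c2, hc2, rfl⟩ := Submodule.mem_sup.mp hb
      have hPsucc : ∀ (w : Lα i) (c : Lα i), c ∈ P k → ⁅w, c⁆ ∈ P (k + 1) := by
        intro w c hc
        have : ⁅w, c⁆ ∈ (⁅(⊤ : LieIdeal ℚ (Lα i)),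
            LieModule.lowerCentralSeries ℚ (Lα i) (Lα i) k⁆ :
              LieSubmodule ℚ (Lα i) (Lα i)) :=
          LieSubmodule.lie_mem_lie trivial hc
        rwa [← LieModule.lowerCentralSeries_succ] at this
      have expand : ⁅s1 + c1, s2 + c2⁆ =
          ⁅s1, s2⁆ + (⁅s1, c2⁆ + ⁅c1, s2 + c2⁆) := by
        rw [add_lie, lie_add]; abel
      rw [SetLike.mem_coe, expand]
      refine Submodule.add_mem _ (Submodule.mem_sup_left (S.lie_mem hs1 hs2)) ?_
      refine Submodule.mem_sup_right (Submodule.add_mem _ (hPsucc _ _ hc2) ?_)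
      have : ⁅c1, s2 + c2⁆ = -⁅s2 + c2, c1⁆ := (lie_skew _ _).symm
      rw [this]
      exact Submodule.neg_mem _ (hPsucc _ _ hc1)
  -- Conclude using nilpotency.
  obtain ⟨m, hm⟩ := hnilp i
  have hSeq : S.toSubmodule = ⊤ := by
    have := key m
    rw [hP] at this
    simp only [hm] at this
    simpa using this
  have hy : y ∈ S := by
    have : y ∈ S.toSubmodule := by rw [hSeq]; trivial
    exact this
  obtain ⟨e, he, rfl⟩ := hy
  exact ⟨e, he, rfl⟩
end

section
/- Let $E \subseteq L$ be a sub Lie algebra of a complete enriched Lie algebra, with structure surjections $\rho_\alpha : L \to L_\alpha$. Then for all $n \geq 1$, the closure of $E^n$ (the $n$-th lower central series term of $E$) equals the $n$-th lower central series closure of the closure of $E$: $\overline{E^n} = \overline{(\overline{E})^n}$. In particular, $\rho_\alpha(E^n) = (\rho_\alpha(E))^n$ for every $\alpha$. -/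
/-- Restriction of a Lie algebra hom to a subalgebra, with codomain the image. -/
noncomputable def lieRestr {L L' : Type*} [LieRing L] [LieAlgebra ℚ L]
    [LieRing L'] [LieAlgebra ℚ L'] (f : L →ₗ⁅ℚ⁆ L') (E : LieSubalgebra ℚ L) :
    E →ₗ⁅ℚ⁆ E.map f where
  toLinearMap := (f.toLinearMap.comp E.incl.toLinearMap).codRestrict
    (E.map f).toSubmodule (fun x => ⟨x.1, x.2, rfl⟩)
  map_lie' := by intros x y; ext; exact f.map_lie x y

lemma lieRestr_surj {L L' : Type*} [LieRing L] [LieAlgebra ℚ L]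
    [LieRing L'] [LieAlgebra ℚ L'] (f : L →ₗ⁅ℚ⁆ L') (E : LieSubalgebra ℚ L) :
    Function.Surjective (lieRestr f E) := by
  rintro ⟨y, hy⟩
  obtain ⟨x, hx, rfl⟩ := hy
  exact ⟨⟨x, hx⟩, rfl⟩

lemma key {L L' : Type*} [LieRing L] [LieAlgebra ℚ L]
    [LieRing L'] [LieAlgebra ℚ L'] (f : L →ₗ⁅ℚ⁆ L') (E : LieSubalgebra ℚ L) (n : ℕ) :
    Submodule.map f.toLinearMap
        (Submodule.map E.incl.toLinearMap
          (LieModule.lowerCentralSeries ℚ E E n).toSubmodule)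
      = Submodule.map (E.map f).incl.toLinearMap
          (LieModule.lowerCentralSeries ℚ (E.map f) (E.map f) n).toSubmodule := by
  have h1 : (LieModule.lowerCentralSeries ℚ (E.map f) (E.map f) n).toSubmodule =
      Submodule.map (lieRestr f E).toLinearMap
        (LieModule.lowerCentralSeries ℚ E E n).toSubmodule := by
    rw [← LieIdeal.lowerCentralSeries_map_eq (f := lieRestr f E) n (lieRestr_surj f E),
      LieIdeal.coe_map_of_surjective (lieRestr_surj f E)]
  rw [h1, ← Submodule.map_comp, ← Submodule.map_comp]
  rfl



/-- Let `E ⊆ L` be a Lie subalgebra of a complete enriched Lie algebra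
over `ℚ` (structure surjections `ρ i : L → Lα i` onto finite-dimensional nilpotent Lie
algebras, directed, `⋂ ker (ρ i) = 0`, complete).  Let `E'` be the closure of `E`
(a Lie subalgebra whose underlying subspace is `{x | ∀ i, ρ i x ∈ ρ i (E)}`).  Then for
all `n`, `ρ i (Eⁿ) = (ρ i (E))ⁿ` for every `i` (images of lower central series terms),
and consequently the closure of `Eⁿ` equals the closure of the `n`-th lower central
series term `(E')ⁿ` of the closure of `E`.  (Mathlib's `lowerCentralSeries _ _ _ n` is
the paper's `E^{n+1}`.) -/
theorem stmt10 {ι L : Type*} [Preorder ι] [IsDirected ι (· ≤ ·)]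
    [LieRing L] [LieAlgebra ℚ L]
    (Lα : ι → Type*) [∀ i, LieRing (Lα i)] [∀ i, LieAlgebra ℚ (Lα i)]
    [∀ i, FiniteDimensional ℚ (Lα i)]
    (hnilp : ∀ i, ∃ m, LieModule.lowerCentralSeries ℚ (Lα i) (Lα i) m = ⊥)
    (ρ : ∀ i, L →ₗ⁅ℚ⁆ Lα i) (hsurj : ∀ i, Function.Surjective (ρ i))
    (t : ∀ i j, i ≤ j → (Lα j →ₗ⁅ℚ⁆ Lα i))
    (ht : ∀ i j (h : i ≤ j) (x : L), t i j h (ρ j x) = ρ i x)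
    (hker : ∀ x : L, (∀ i, ρ i x = 0) → x = 0)
    (hcomplete : ∀ y : ∀ i, Lα i, (∀ i j (h : i ≤ j), t i j h (y j) = y i) →
      ∃ x : L, ∀ i, ρ i x = y i)
    (E E' : LieSubalgebra ℚ L)
    (hE' : E'.toSubmodule =
      ⨅ i, Submodule.comap (ρ i).toLinearMap
        (Submodule.map (ρ i).toLinearMap E.toSubmodule)) :
    (∀ (n : ℕ) (i : ι),
      Submodule.map (ρ i).toLinearMap
        (Submodule.map E.incl.toLinearMap
          (LieModule.lowerCentralSeries ℚ E E n).toSubmodule)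
      = Submodule.map (E.map (ρ i)).incl.toLinearMap
          (LieModule.lowerCentralSeries ℚ (E.map (ρ i)) (E.map (ρ i)) n).toSubmodule) ∧
    (∀ n : ℕ,
      (⨅ i, Submodule.comap (ρ i).toLinearMap
        (Submodule.map (ρ i).toLinearMap
          (Submodule.map E.incl.toLinearMap
            (LieModule.lowerCentralSeries ℚ E E n).toSubmodule)))
      = ⨅ i, Submodule.comap (ρ i).toLinearMap
          (Submodule.map (ρ i).toLinearMap
            (Submodule.map E'.incl.toLinearMap
              (LieModule.lowerCentralSeries ℚ E' E' n).toSubmodule))) := by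
  have hmap : ∀ i, E'.map (ρ i) = E.map (ρ i) := by
    intro i
    ext y
    constructor
    · rintro ⟨x, hx, rfl⟩
      have hx' : x ∈ E'.toSubmodule := hx
      rw [hE'] at hx'
      simp only [Submodule.mem_iInf, Submodule.mem_comap] at hx'
      exact hx' i
    · rintro ⟨x, hx, rfl⟩
      refine ⟨x, ?_, rfl⟩
      show x ∈ E'.toSubmodule
      rw [hE']
      simp only [Submodule.mem_iInf, Submodule.mem_comap]
      intro j
      exact ⟨x, hx, rfl⟩
  refine ⟨fun n i => key (ρ i) E n, fun n => iInf_congr fun i => ?_⟩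
  rw [key (ρ i) E n, key (ρ i) E' n, hmap i]
end

section
/- Let $G$ be a group and define $Tor(G) = \{a \in G : \text{for each } n \text{ there is } k \geq 1 \text{ with } a^k \in G^n\}$, where $G^n$ is the $n$-th term of the lower central series of $G$. Then $Tor(G)$ is a normal subgroup of $G$, and if $G$ is abelian, $Tor(G)$ is exactly the torsion subgroup of $G$. -/
/-!
Modulo each term `Gⁿ` of the lower central series `G` becomes nilpotent, and `Tor(G)` is the
intersection of the preimages of the sets of torsion elements of the quotients `G ⧸ Gⁿ`. So
everything reduces to the fact that the elements of finite order of a nilpotent group form a normal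
subgroup. For closure under products, a nilpotent group generated by finitely many torsion elements
is finite, by induction on the nilpotency class: `G ⧸ Z(G)` is finite, hence `G` has only
finitely many commutators and, by Schur's theorem, a finite commutator subgroup, while the
abelianization is a finitely generated torsion abelian group. An abelian group is nilpotent, so
there `Tor(G)` is the torsion subgroup.
-/

open Subgroup
open scoped commutatorElement

section

variable {G : Type*} [Group G]

theorem commutatorElement_mul_mem_center {z w : G} (hz : z ∈ center G) (hw : w ∈ center G)
    (g h : G) : ⁅g * z, h * w⁆ = ⁅g, h⁆ := by
  have hz1 (x : G) : ⁅z, x⁆ = 1 :=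
    commutatorElement_eq_one_iff_mul_comm.mpr (mem_center_iff.mp hz x).symm
  have hw1 (x : G) : ⁅x, w⁆ = 1 :=
    commutatorElement_eq_one_iff_mul_comm.mpr (mem_center_iff.mp hw x)
  rw [commutatorElement_mul_left_eq_conj_mul, hz1, commutatorElement_mul_right_eq_mul_conj, hw1]
  group

theorem finite_commutatorSet_of_finite_quotient_center [Finite (G ⧸ center G)] :
    Finite (commutatorSet G) := by
  have hsub : commutatorSet G ⊆
      Set.range fun p : (G ⧸ center G) × (G ⧸ center G) => ⁅p.1.out, p.2.out⁆ := by
    rintro _ ⟨g, h, rfl⟩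
    obtain ⟨z, hz⟩ := QuotientGroup.mk_out_eq_mul (center G) g
    obtain ⟨w, hw⟩ := QuotientGroup.mk_out_eq_mul (center G) h
    exact ⟨(g, h), by simp only [hz, hw, commutatorElement_mul_mem_center z.2 w.2]⟩
  exact ((Set.finite_range _).subset hsub).to_subtype

theorem Subgroup.closure_image_eq_top {K : Type*} [Group K] {f : G →* K}
    (hf : Function.Surjective f) {s : Set G} (hs : closure s = ⊤) : closure (f '' s) = ⊤ := by
  rw [← MonoidHom.map_closure, hs, map_top_of_surjective f hf]

theorem CommGroup.finite_of_closure_eq_top_of_isOfFinOrder {A : Type*} [CommGroup A]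
    {s : Set A} (hs : s.Finite) (hs_tors : ∀ x ∈ s, IsOfFinOrder x) (hs_gen : closure s = ⊤) :
    Finite A :=
  have : Group.FG A := Group.fg_iff.mpr ⟨s, hs_gen, hs⟩
  finite_of_fg_isMulTorsion A fun a =>
    (closure_le (CommGroup.torsion A)).mpr hs_tors (hs_gen ▸ mem_top a)

theorem Group.IsNilpotent.finite_of_closure_eq_top_of_isOfFinOrder [Group.IsNilpotent G]
    {s : Set G} (hs : s.Finite) (hs_tors : ∀ x ∈ s, IsOfFinOrder x) (hs_gen : closure s = ⊤) :
    Finite G := by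
  suffices ∀ s : Set G, s.Finite → (∀ x ∈ s, IsOfFinOrder x) → closure s = ⊤ →
      Finite G from this s hs hs_tors hs_gen
  refine Group.nilpotent_center_quotient_ind (P := fun G _ _ => ∀ s : Set G, s.Finite →
      (∀ x ∈ s, IsOfFinOrder x) → closure s = ⊤ → Finite G)
    G (fun _ _ _ _ _ _ _ => inferInstance) ?_
  intro H _ _ ih s hs hs_tors hs_gen
  have image_tors (N : Subgroup H) [N.Normal] :
      ∀ y ∈ QuotientGroup.mk' N '' s, IsOfFinOrder y :=
    Set.forall_mem_image.mpr fun x hx => MonoidHom.isOfFinOrder _ (hs_tors x hx)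
  have : Finite (H ⧸ center H) :=
    ih _ (hs.image _) (image_tors _)
      (closure_image_eq_top (QuotientGroup.mk'_surjective _) hs_gen)
  have : Finite (Abelianization H) :=
    CommGroup.finite_of_closure_eq_top_of_isOfFinOrder (hs.image _) (image_tors _)
      (closure_image_eq_top (QuotientGroup.mk'_surjective _) hs_gen)
  have := finite_commutatorSet_of_finite_quotient_center (G := H)
  exact Finite.of_equiv (Abelianization H × _root_.commutator H)
    groupEquivQuotientProdSubgroup.symm

theorem Group.IsNilpotent.isOfFinOrder_mul [Group.IsNilpotent G] {x y : G} (hx : IsOfFinOrder x)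
    (hy : IsOfFinOrder y) : IsOfFinOrder (x * y) := by
  set S := closure ({x, y} : Set G)
  have hs : (((↑) : S → G) ⁻¹' {x, y}).Finite :=
    (Set.toFinite {x, y}).preimage Subtype.val_injective.injOn
  have hs_tors : ∀ u ∈ ((↑) : S → G) ⁻¹' {x, y}, IsOfFinOrder u := by
    rintro u (hu | hu) <;> rw [← Submonoid.isOfFinOrder_coe, hu] <;> assumption
  have := finite_of_closure_eq_top_of_isOfFinOrder hs hs_tors closure_closure_coe_preimage
  have hxy : IsOfFinOrder
      ((⟨x, subset_closure (by simp)⟩ : S) * ⟨y, subset_closure (by simp)⟩) :=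
    isOfFinOrder_of_finite _
  exact Submonoid.isOfFinOrder_coe.mpr hxy

variable (G) in
def torsionOfIsNilpotent [Group.IsNilpotent G] : Subgroup G where
  carrier := {x | IsOfFinOrder x}
  mul_mem' := Group.IsNilpotent.isOfFinOrder_mul
  one_mem' := IsOfFinOrder.one
  inv_mem' := IsOfFinOrder.inv

instance torsionOfIsNilpotent_normal [Group.IsNilpotent G] : (torsionOfIsNilpotent G).Normal :=
  ⟨fun _ hx g => (isConj_iff.mpr ⟨g, rfl⟩).isOfFinOrder hx⟩

instance isNilpotent_quotient_lowerCentralSeries (n : ℕ) :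
    Group.IsNilpotent (G ⧸ (⊤ : Subgroup G).lowerCentralSeries n) := by
  refine Subgroup.nilpotent_iff_lowerCentralSeries.mpr ⟨n, ?_⟩
  rw [← map_top_of_surjective _ (QuotientGroup.mk'_surjective _), ← map_lowerCentralSeries,
    Subgroup.map_eq_bot_iff, QuotientGroup.ker_mk']

theorem QuotientGroup.isOfFinOrder_mk_iff {N : Subgroup G} [N.Normal] {a : G} :
    IsOfFinOrder (a : G ⧸ N) ↔ ∃ k : ℕ, 1 ≤ k ∧ a ^ k ∈ N := by
  simp only [isOfFinOrder_iff_pow_eq_one, ← QuotientGroup.mk_pow, QuotientGroup.eq_one_iff,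
    Nat.pos_iff_ne_zero, Nat.one_le_iff_ne_zero]

variable (G) in
def lowerCentralTorsion : Subgroup G :=
  ⨅ n, (torsionOfIsNilpotent (G ⧸ (⊤ : Subgroup G).lowerCentralSeries n)).comap
    (QuotientGroup.mk' _)

instance lowerCentralTorsion_normal : (lowerCentralTorsion G).Normal :=
  normal_iInf_normal fun _ => inferInstance

theorem mem_lowerCentralTorsion {a : G} :
    a ∈ lowerCentralTorsion G ↔
      ∀ n : ℕ, ∃ k : ℕ, 1 ≤ k ∧ a ^ k ∈ (⊤ : Subgroup G).lowerCentralSeries n := by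
  simp only [lowerCentralTorsion, mem_iInf, mem_comap]
  exact forall_congr' fun _ => QuotientGroup.isOfFinOrder_mk_iff

theorem IsOfFinOrder.mem_lowerCentralTorsion {a : G} (ha : IsOfFinOrder a) :
    a ∈ lowerCentralTorsion G :=
  mem_iInf.mpr fun _ => (QuotientGroup.mk' _).isOfFinOrder ha

theorem mem_lowerCentralTorsion_iff_isOfFinOrder [Group.IsNilpotent G] {a : G} :
    a ∈ lowerCentralTorsion G ↔ IsOfFinOrder a := by
  refine ⟨fun ha => ?_, IsOfFinOrder.mem_lowerCentralTorsion⟩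
  obtain ⟨n, hn⟩ := Subgroup.nilpotent_iff_lowerCentralSeries.mp ‹Group.IsNilpotent G›
  obtain ⟨k, hk, hak⟩ := mem_lowerCentralTorsion.mp ha n
  rw [hn, mem_bot] at hak
  exact isOfFinOrder_iff_pow_eq_one.mpr ⟨k, hk, hak⟩

end

/-- For a group `G` let
`Tor(G) = {a ∈ G | ∀ n, ∃ k ≥ 1, a^k ∈ Gⁿ}`, where `Gⁿ` is the lower central series
(Mathlib's `lowerCentralSeries G n` is the paper's `G^{n+1}`).  Then `Tor(G)` is a
normal subgroup of `G`, and if `G` is abelian then `Tor(G)` is exactly the torsion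
subgroup (the set of elements of finite order). -/
theorem stmt12 (G : Type*) [Group G] :
    ∃ H : Subgroup G, H.Normal ∧
      (∀ a : G, a ∈ H ↔ ∀ n : ℕ, ∃ k : ℕ, 1 ≤ k ∧ a ^ k ∈ (⊤ : Subgroup G).lowerCentralSeries n) ∧
      ((∀ x y : G, x * y = y * x) → ∀ a : G, a ∈ H ↔ IsOfFinOrder a) := by
  refine ⟨lowerCentralTorsion G, inferInstance, fun _ => mem_lowerCentralTorsion,
    fun hcomm _ => ?_⟩
  have : Group.IsNilpotent G := Subgroup.nilpotent_iff_lowerCentralSeries.mpr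
    ⟨1, lowerCentralSeries_one_eq_bot_iff.mpr ⟨⟨hcomm⟩⟩⟩
  exact mem_lowerCentralTorsion_iff_isOfFinOrder
end
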